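/- If X is a Banach space and ε ∈ (0,2] with δ̃_uacs^X(ε) > 0, then for every τ > 0 with 2τ < δ̃_uacs^X(ε) one has 2ρ_uacs^X(τ) ≤ τε. -/

import Mathlib

open Filter Topology

/-- The modulus δ̃_uacs. -/
noncomputable def deltaTildeUacs (X : Type*) [NormedAddCommGroup X] [NormedSpace ℝ X]
    (ε : ℝ) : ℝ :=
  sInf {d : ℝ | ∃ (x y : X) (f : StrongDual ℝ X), ‖x‖ = 1 ∧ ‖y‖ = 1 ∧ ‖f‖ = 1 ∧
    f y ≤ 1 - ε ∧ d = max (1 - ‖x + y‖ / 2) (1 - f x)}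

/-- The uacs modulus of smoothness. -/
noncomputable def rhoUacs (X : Type*) [NormedAddCommGroup X] [NormedSpace ℝ X] (τ : ℝ) : ℝ :=
  sSup {r : ℝ | ∃ x y : X, ‖x‖ = 1 ∧ ‖y‖ = 1 ∧ 2 * (1 - τ) ≤ ‖x + y‖ ∧
    r = (‖x + τ • y‖ + ‖x - τ • y‖) / 2 - 1}

theorem rhoUacs_le_of_deltaTilde_pos (X : Type*) [NormedAddCommGroup X] [NormedSpace ℝ X]
    [CompleteSpace X] (ε : ℝ) (hε : ε ∈ Set.Ioc (0 : ℝ) 2) (hδ : 0 < deltaTildeUacs X ε) :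
    ∀ τ : ℝ, 0 < τ → 2 * τ < deltaTildeUacs X ε → 2 * rhoUacs X τ ≤ τ * ε := by
  obtain ⟨hε0, hε2⟩ := hε
  intro τ hτ h2τ
  set S : Set ℝ := {d : ℝ | ∃ (x y : X) (f : StrongDual ℝ X), ‖x‖ = 1 ∧ ‖y‖ = 1 ∧
    ‖f‖ = 1 ∧ f y ≤ 1 - ε ∧ d = max (1 - ‖x + y‖ / 2) (1 - f x)} with hS
  have hbdd : BddBelow S := by
    refine ⟨0, ?_⟩
    rintro d ⟨x, y, f, hx, hy, hf, hfy, rfl⟩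
    have h1 : f x ≤ 1 := by
      have := f.le_opNorm x
      rw [hf, hx] at this
      calc f x ≤ ‖f x‖ := le_abs_self _
        _ ≤ 1 := by simpa using this
    have : (0:ℝ) ≤ 1 - f x := by linarith
    exact le_max_of_le_right this
  have hδS : ∀ d ∈ S, deltaTildeUacs X ε ≤ d := fun d hd => csInf_le hbdd hd
  -- every element of the rho set is ≤ τ * ε / 2
  have key : ∀ r ∈ {r : ℝ | ∃ x y : X, ‖x‖ = 1 ∧ ‖y‖ = 1 ∧ 2 * (1 - τ) ≤ ‖x + y‖ ∧
      r = (‖x + τ • y‖ + ‖x - τ • y‖) / 2 - 1}, r ≤ τ * ε / 2 := by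
    rintro r ⟨x, y, hx, hy, hxy, rfl⟩
    -- first show δ ≤ 1 using the unit vector x, hence τ < 1/2
    have hxne : x ≠ 0 := by intro h; rw [h, norm_zero] at hx; norm_num at hx
    have hδ1 : deltaTildeUacs X ε ≤ 1 := by
      obtain ⟨g, hg1, hgx⟩ := exists_dual_vector ℝ x (norm_ne_zero_iff.mpr hxne)
      refine hδS 1 ⟨x, -x, g, hx, by simpa using hx, hg1, ?_, ?_⟩
      · have : g (-x) = -1 := by rw [map_neg, hgx, hx]; norm_num
        rw [this]; linarith
      · have hgx' : g x = 1 := by rw [hgx, hx]; norm_num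
        simp [hgx']
    have hτhalf : τ < 1 / 2 := by linarith
    -- x - τ • y ≠ 0
    have hnorm_lb : 1 - τ ≤ ‖x - τ • y‖ := by
      have := norm_sub_norm_le x (τ • y)
      rw [hx, norm_smul, Real.norm_eq_abs, abs_of_pos hτ, hy, mul_one] at this
      linarith
    have hne : x - τ • y ≠ 0 := by
      intro h
      rw [h, norm_zero] at hnorm_lb
      linarith
    obtain ⟨f, hf1, hfval⟩ := exists_dual_vector ℝ (x - τ • y) (norm_ne_zero_iff.mpr hne)
    have hfval' : f x - τ * f y = ‖x - τ • y‖ := by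
      have : f (x - τ • y) = f x - τ * f y := by
        rw [map_sub, map_smul]; simp
      rw [← this]; exact_mod_cast hfval
    have hfx_le : f x ≤ 1 := by
      have := f.le_opNorm x
      rw [hf1, hx] at this
      calc f x ≤ ‖f x‖ := le_abs_self _
        _ ≤ 1 := by simpa using this
    have hfy_lb : -1 ≤ f y := by
      have := f.le_opNorm y
      rw [hf1, hy] at this
      have : |f y| ≤ 1 := by simpa using this
      linarith [abs_le.mp this |>.1]
    -- f y > 1 - ε
    have hfy : 1 - ε < f y := by
      by_contra h
      push_neg at h
      have hd : deltaTildeUacs X ε ≤ max (1 - ‖x + y‖ / 2) (1 - f x) :=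
        hδS _ ⟨x, y, f, hx, hy, hf1, h, rfl⟩
      have h1 : 1 - ‖x + y‖ / 2 ≤ τ := by linarith
      have h2 : 1 - f x ≤ 2 * τ := by
        have : 1 - 2 * τ ≤ f x := by nlinarith
        linarith
      have : max (1 - ‖x + y‖ / 2) (1 - f x) < deltaTildeUacs X ε := by
        apply max_lt <;> linarith
      linarith
    -- bounds on the two norms
    have hub1 : ‖x + τ • y‖ ≤ 1 + τ := by
      have := norm_add_le x (τ • y)
      rw [hx, norm_smul, Real.norm_eq_abs, abs_of_pos hτ, hy, mul_one] at this
      linarith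
    have hub2 : ‖x - τ • y‖ ≤ 1 - τ * (1 - ε) := by
      rw [← hfval']
      nlinarith
    linarith
  have hρ : rhoUacs X τ ≤ τ * ε / 2 := by
    apply Real.sSup_le key
    positivity
  linarith
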